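/- For every odd positive integer n there exists an integer Chebyshev polynomial of degree n on [0,1] of the form q(x) = (2x−1)·p(x(1−x)), where p is a polynomial with integer coefficients of degree (n−1)/2; that is, (sup_{x∈[0,1]} |q(x)|)^{1/n} = t_{ℤ,n}([0,1]). -/

import Mathlib

open Polynomial Filter

/-- The supremum norm of an integer polynomial on the interval `[a, b]`. -/
noncomputable def supNorm (p : Polynomial ℤ) (a b : ℝ) : ℝ :=
  sSup ((fun x => |Polynomial.aeval x p|) '' Set.Icc a b)

/-- `tZ n a b` is the infimum over nonzero integer polynomials `p` of degree at most `n`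
of `(sup_{x ∈ [a,b]} |p(x)|)^(1/n)`. -/
noncomputable def tZ (n : ℕ) (a b : ℝ) : ℝ :=
  sInf {r : ℝ | ∃ p : Polynomial ℤ, p ≠ 0 ∧ p.natDegree ≤ n ∧
    r = supNorm p a b ^ ((1 : ℝ) / n)}

/-!
Only finitely many integer polynomials of degree `≤ n` have sup norm `≤ 1` on `[0,1]`: their
values at the nodes `j/(n+1)`, scaled by `(n+1)^n`, are bounded integers that determine them.
So an integer Chebyshev polynomial `q` exists. With `w = x(1-x)`, which is invariant under
`x ↦ 1-x`, write `q = A(w) + x B(w)` with `deg A, deg B ≤ k`, where `n = 2k+1`. Then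
`(x-1) q(x) + x q(1-x) = (2x-1) A(w)`, and `x q(x) + (x-1) q(1-x) = (2x-1) B(w)` when `A = 0`.
Since `|x-1| + |x| = 1` on `[0,1]`, these have sup norm at most that of `q`, so one of them is
again an integer Chebyshev polynomial. Its `p` has degree exactly `k`: otherwise multiplying by
`w`, which is at most `1/4`, would give a strictly better competitor of degree `≤ n`.
-/

open Set

section SupNorm

variable (p : ℤ[X]) {a b : ℝ}

lemma supNorm_nonneg (a b : ℝ) : 0 ≤ supNorm p a b :=
  Real.sSup_nonneg (by rintro _ ⟨x, -, rfl⟩; exact abs_nonneg _)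

lemma abs_aeval_le_supNorm {x : ℝ} (hx : x ∈ Icc a b) : |aeval x p| ≤ supNorm p a b :=
  le_csSup (isCompact_Icc.image p.continuous_aeval.abs).bddAbove (mem_image_of_mem _ hx)

lemma supNorm_le {K : ℝ} (hab : a ≤ b) (h : ∀ x ∈ Icc a b, |aeval x p| ≤ K) :
    supNorm p a b ≤ K :=
  csSup_le ((nonempty_Icc.2 hab).image _) (by rintro _ ⟨x, hx, rfl⟩; exact h x hx)

lemma supNorm_one (hab : a ≤ b) : supNorm 1 a b = 1 :=
  le_antisymm (supNorm_le 1 hab fun x _ => by simp)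
    (by simpa using abs_aeval_le_supNorm 1 (left_mem_Icc.2 hab))

variable {p} in
lemma supNorm_pos (hab : a < b) (hp : p ≠ 0) : 0 < supNorm p a b := by
  refine (supNorm_nonneg p a b).lt_of_ne' fun h => hp ?_
  have hroot : ∀ x ∈ Icc a b, (p.map (Int.castRingHom ℝ)).IsRoot x := fun x hx => by
    simpa [h, aeval_def, eval_map] using abs_aeval_le_supNorm p hx
  exact map_injective _ Int.cast_injective
    (by simpa using eq_zero_of_infinite_isRoot _ ((Icc_infinite hab).mono hroot))

end SupNorm

lemma exists_intCast_eq_pow_mul_aeval_div (q : ℤ[X]) {n : ℕ} (hq : q.natDegree ≤ n) (j : ℤ)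
    {m : ℤ} (hm : m ≠ 0) : ∃ z : ℤ, (z : ℝ) = (m : ℝ) ^ n * aeval ((j : ℝ) / m) q := by
  refine ⟨m ^ (n - q.natDegree) * (q.scaleRoots m).eval j, ?_⟩
  have h := scaleRoots_eval₂_mul (p := q) (Int.castRingHom ℝ) ((j : ℝ) / m) m
  have hcast := eval₂_hom (p := q.scaleRoots m) (Int.castRingHom ℝ) j
  rw [eq_intCast, mul_div_cancel₀ _ (Int.cast_ne_zero.2 hm)] at h
  rw [eq_intCast, eq_intCast] at hcast
  rw [aeval_def, algebraMap_int_eq, Int.cast_mul, Int.cast_pow, ← hcast, h, ← mul_assoc,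
    ← pow_add, Nat.sub_add_cancel hq]

lemma finite_setOf_supNorm_le_one (n : ℕ) :
    {q : ℤ[X] | q.natDegree ≤ n ∧ supNorm q 0 1 ≤ 1}.Finite := by
  set N : ℕ := n + 1
  have hN : (N : ℝ) ≠ 0 := by positivity
  let node : Fin N → ℝ := fun j => (j : ℝ) / N
  have hnode : ∀ j, node j ∈ Icc (0 : ℝ) 1 := fun j =>
    ⟨by positivity, div_le_one_of_le₀ (by exact_mod_cast j.isLt.le) (by positivity)⟩
  have hinj : InjOn (fun q j => aeval (node j) q)
      {q : ℤ[X] | q.natDegree ≤ n ∧ supNorm q 0 1 ≤ 1} := by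
    intro q hq q' hq' h
    refine map_injective (Int.castRingHom ℝ) Int.cast_injective
      (eq_of_natDegree_lt_card_of_eval_eq _ _ (f := node)
        (fun i j hij => Fin.ext (by simpa [node, hN] using hij)) (fun j => ?_) ?_)
    · simpa [aeval_def, eval_map] using congrFun h j
    · rw [Fintype.card_fin]
      exact Nat.lt_succ_of_le
        (max_le (natDegree_map_le.trans hq.1) (natDegree_map_le.trans hq'.1))
  refine Finite.of_finite_image (Finite.subset (Finite.pi fun _ : Fin N =>
    (finite_Icc (-(N : ℤ) ^ n) (N ^ n)).image fun z : ℤ => (z : ℝ) / N ^ n) ?_) hinj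
  rintro _ ⟨q, ⟨hqn, hq1⟩, rfl⟩ j -
  obtain ⟨z, hz⟩ := exists_intCast_eq_pow_mul_aeval_div q hqn j (m := N) (by positivity)
  refine ⟨z, abs_le.1 ?_, ?_⟩
  · have hqj := (abs_aeval_le_supNorm q (hnode j)).trans hq1
    have hz' : |(z : ℝ)| ≤ (N : ℝ) ^ n := by
      rw [hz, abs_mul, abs_of_nonneg (by positivity)]
      exact mul_le_of_le_one_right (by positivity) hqj
    exact_mod_cast hz'
  · simp [hz, node, hN]

structure IsIntChebyshev (n : ℕ) (a b : ℝ) (q : ℤ[X]) : Prop where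
  ne_zero : q ≠ 0
  natDegree_le : q.natDegree ≤ n
  supNorm_le_supNorm : ∀ p : ℤ[X], p ≠ 0 → p.natDegree ≤ n → supNorm q a b ≤ supNorm p a b

namespace IsIntChebyshev

variable {n : ℕ} {a b : ℝ} {q : ℤ[X]}

lemma tZ_eq (hq : IsIntChebyshev n a b q) : tZ n a b = supNorm q a b ^ ((1 : ℝ) / n) := by
  refine le_antisymm (csInf_le ⟨0, ?_⟩ ⟨q, hq.ne_zero, hq.natDegree_le, rfl⟩)
    (le_csInf ⟨_, q, hq.ne_zero, hq.natDegree_le, rfl⟩ ?_)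
  · rintro _ ⟨p, -, -, rfl⟩
    exact Real.rpow_nonneg (supNorm_nonneg p a b) _
  · rintro _ ⟨p, hp, hpn, rfl⟩
    exact Real.rpow_le_rpow (supNorm_nonneg q a b) (hq.supNorm_le_supNorm p hp hpn)
      (by positivity)

lemma of_supNorm_le (hq : IsIntChebyshev n a b q) {r : ℤ[X]} (hr : r ≠ 0)
    (hrn : r.natDegree ≤ n) (hle : supNorm r a b ≤ supNorm q a b) : IsIntChebyshev n a b r :=
  ⟨hr, hrn, fun p hp hpn => hle.trans (hq.supNorm_le_supNorm p hp hpn)⟩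

end IsIntChebyshev

lemma exists_isIntChebyshev (n : ℕ) : ∃ q, IsIntChebyshev n 0 1 q := by
  have hone : (1 : ℤ[X]) ∈ {q : ℤ[X] | q ≠ 0 ∧ q.natDegree ≤ n ∧ supNorm q 0 1 ≤ 1} :=
    ⟨one_ne_zero, by simp, (supNorm_one zero_le_one).le⟩
  obtain ⟨q, ⟨hq0, hqn, hq1⟩, hmin⟩ := Set.exists_min_image _ (supNorm · 0 1)
    ((finite_setOf_supNorm_le_one n).subset fun q hq => hq.2) ⟨1, hone⟩
  refine ⟨q, hq0, hqn, fun p hp hpn => ?_⟩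
  by_cases hp1 : supNorm p 0 1 ≤ 1
  · exact hmin p ⟨hp, hpn, hp1⟩
  · exact hq1.trans (not_le.1 hp1).le

lemma natDegree_X_mul_one_sub_X {R : Type*} [CommRing R] [Nontrivial R] :
    (X * (1 - X) : R[X]).natDegree = 2 := by
  compute_degree!

lemma exists_eq_comp_add_X_mul_comp {R : Type*} [CommRing R] [Nontrivial R] (k : ℕ)
    (q : R[X]) (hq : q.natDegree ≤ 2 * k + 1) : ∃ A B : R[X], A.natDegree ≤ k ∧ B.natDegree ≤ k ∧
      q = A.comp (X * (1 - X)) + X * B.comp (X * (1 - X)) := by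
  induction k generalizing q with
  | zero =>
    refine ⟨C (q.coeff 0), C (q.coeff 1), natDegree_C _ |>.le, natDegree_C _ |>.le, ?_⟩
    conv_lhs => rw [eq_X_add_C_of_natDegree_le_one hq]
    simp only [C_comp]
    ring
  | succ k ih =>
    have hV : (X ^ 2 - X : R[X]).Monic := by monicity!
    have hV2 : (X ^ 2 - X : R[X]).natDegree = 2 := by compute_degree!
    obtain ⟨A, B, hA, hB, hAB⟩ :=
      ih (q /ₘ (X ^ 2 - X)) (by rw [natDegree_divByMonic _ hV, hV2]; omega)
    obtain ⟨c₀, c₁, hr⟩ : ∃ c₀ c₁, q %ₘ (X ^ 2 - X) = C c₁ * X + C c₀ :=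
      ⟨_, _, eq_X_add_C_of_natDegree_le_one <| Nat.le_of_lt_succ <| hV2 ▸
        natDegree_modByMonic_lt q hV fun h => by simp [h] at hV2⟩
    have hX := natDegree_X_le (R := R)
    refine ⟨C c₀ - X * A, C c₁ - X * B, ?_, ?_, ?_⟩
    · exact (natDegree_sub_le _ _).trans (max_le (by simp) (natDegree_mul_le.trans (by omega)))
    · exact (natDegree_sub_le _ _).trans (max_le (by simp) (natDegree_mul_le.trans (by omega)))
    · conv_lhs => rw [← modByMonic_add_div q (X ^ 2 - X), hr, hAB]
      simp only [sub_comp, mul_comp, C_comp, X_comp]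
      ring

lemma abs_mul_add_mul_le {s t u v M : ℝ} (hst : |s| + |t| ≤ 1) (hu : |u| ≤ M) (hv : |v| ≤ M) :
    |s * u + t * v| ≤ M := by
  have hM : 0 ≤ M := (abs_nonneg u).trans hu
  calc |s * u + t * v| ≤ |s| * |u| + |t| * |v| := by
        simpa only [abs_mul] using abs_add_le (s * u) (t * v)
    _ ≤ |s| * M + |t| * M := by gcongr
    _ ≤ M := by rw [← add_mul]; exact mul_le_of_le_one_left hM hst

lemma supNorm_mul_add_mul_comp_one_sub_X_le (q s t : ℤ[X])
    (hst : ∀ x ∈ Icc (0 : ℝ) 1, |aeval x s| + |aeval x t| ≤ 1) :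
    supNorm (s * q + t * q.comp (1 - X)) 0 1 ≤ supNorm q 0 1 := by
  refine supNorm_le _ zero_le_one fun x hx => ?_
  have hx' : 1 - x ∈ Icc (0 : ℝ) 1 := ⟨by linarith [hx.2], by linarith [hx.1]⟩
  simpa [aeval_comp] using abs_mul_add_mul_le (hst x hx) (abs_aeval_le_supNorm q hx)
    (abs_aeval_le_supNorm q hx')

lemma exists_supNorm_two_mul_X_sub_one_mul_comp_le {k : ℕ} {q : ℤ[X]} (hq0 : q ≠ 0)
    (hq : q.natDegree ≤ 2 * k + 1) :
    ∃ p : ℤ[X], p ≠ 0 ∧ p.natDegree ≤ k ∧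
      supNorm ((2 * X - 1) * p.comp (X * (1 - X))) 0 1 ≤ supNorm q 0 1 := by
  obtain ⟨A, B, hA, hB, rfl⟩ := exists_eq_comp_add_X_mul_comp k q hq
  have hsymm (P : ℤ[X]) : (P.comp (X * (1 - X))).comp (1 - X) = P.comp (X * (1 - X)) := by
    rw [comp_assoc]
    congr 1
    simp only [mul_comp, sub_comp, one_comp, X_comp]
    ring
  have habs : ∀ x ∈ Icc (0 : ℝ) 1, |aeval x (X : ℤ[X])| + |aeval x (X - 1 : ℤ[X])| ≤ 1 :=
    fun x hx => by
      simp only [map_sub, aeval_X, map_one]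
      rw [abs_of_nonneg hx.1, abs_of_nonpos (by linarith [hx.2])]
      linarith
  by_cases hA0 : A = 0
  · subst hA0
    rw [zero_comp, zero_add] at hq0 ⊢
    refine ⟨B, fun hB0 => hq0 (by simp [hB0]), hB,
      Eq.trans_le ?_ (supNorm_mul_add_mul_comp_one_sub_X_le _ X (X - 1) habs)⟩
    congr 1
    simp only [mul_comp, X_comp, hsymm]
    ring
  · refine ⟨A, hA0, hA, Eq.trans_le ?_ (supNorm_mul_add_mul_comp_one_sub_X_le _ (X - 1) X
      fun x hx => by rw [add_comm]; exact habs x hx)⟩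
    congr 1
    simp only [add_comp, mul_comp, X_comp, hsymm]
    ring

lemma natDegree_two_mul_X_sub_one_mul_comp {p : ℤ[X]} (hp : p ≠ 0) :
    ((2 * X - 1) * p.comp (X * (1 - X))).natDegree = 2 * p.natDegree + 1 := by
  have hcomp : p.comp (X * (1 - X)) ≠ 0 := by
    rw [Ne, comp_eq_zero_iff]
    rintro (h | ⟨-, h⟩)
    · exact hp h
    · simpa [natDegree_X_mul_one_sub_X] using congrArg natDegree h
  have hlin : (2 * X - 1 : ℤ[X]).natDegree = 1 := by compute_degree!
  rw [natDegree_mul (fun h => by simp [h] at hlin) hcomp, natDegree_comp,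
    natDegree_X_mul_one_sub_X, hlin]
  ring

lemma IsIntChebyshev.natDegree_eq {k : ℕ} {p : ℤ[X]}
    (h : IsIntChebyshev (2 * k + 1) 0 1 ((2 * X - 1) * p.comp (X * (1 - X)))) :
    p.natDegree = k := by
  set r := (2 * X - 1) * p.comp (X * (1 - X))
  have hp : p ≠ 0 := by rintro rfl; exact h.ne_zero (by simp [r])
  have hr : r.natDegree = 2 * p.natDegree + 1 := natDegree_two_mul_X_sub_one_mul_comp hp
  have hrk := h.natDegree_le
  by_contra hpk
  have hW := natDegree_X_mul_one_sub_X (R := ℤ)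
  have hWr : X * (1 - X) * r ≠ 0 :=
    mul_ne_zero (fun h => by simp [h] at hW) h.ne_zero
  have hWrk : (X * (1 - X) * r).natDegree ≤ 2 * k + 1 := by
    have hmul := natDegree_mul_le (p := X * (1 - X)) (q := r)
    omega
  have hsup : supNorm (X * (1 - X) * r) 0 1 ≤ 4⁻¹ * supNorm r 0 1 := by
    refine supNorm_le _ zero_le_one fun x hx => ?_
    have hWx : |aeval x (X * (1 - X) : ℤ[X])| ≤ 4⁻¹ := by
      simp only [map_mul, map_sub, aeval_X, map_one]
      exact abs_le.2 ⟨by nlinarith [hx.1, hx.2], by nlinarith [sq_nonneg (x - 1 / 2)]⟩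
    rw [map_mul, abs_mul]
    exact mul_le_mul hWx (abs_aeval_le_supNorm r hx) (abs_nonneg _) (by norm_num)
  have hmin := h.supNorm_le_supNorm _ hWr hWrk
  have hpos := supNorm_pos zero_lt_one h.ne_zero
  linarith

theorem stmt_9_general (n : ℕ) (hodd : Odd n) :
    ∃ p : Polynomial ℤ, p.natDegree = (n - 1) / 2 ∧
      supNorm ((2 * Polynomial.X - 1) * p.comp (Polynomial.X * (1 - Polynomial.X))) 0 1
          ^ ((1 : ℝ) / n) = tZ n 0 1 := by
  obtain ⟨k, rfl⟩ := hodd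
  obtain ⟨q, hq⟩ := exists_isIntChebyshev (2 * k + 1)
  obtain ⟨p, hp, hpk, hle⟩ :=
    exists_supNorm_two_mul_X_sub_one_mul_comp_le hq.ne_zero hq.natDegree_le
  have hr : IsIntChebyshev (2 * k + 1) 0 1 ((2 * X - 1) * p.comp (X * (1 - X))) :=
    hq.of_supNorm_le (fun h => by simpa [h] using natDegree_two_mul_X_sub_one_mul_comp hp)
      (by rw [natDegree_two_mul_X_sub_one_mul_comp hp]; omega) hle
  exact ⟨p, by rw [hr.natDegree_eq]; omega, hr.tZ_eq.symm⟩

theorem stmt_9 (n : ℕ) (hn : 0 < n) (hodd : Odd n) :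
    ∃ p : Polynomial ℤ, p.natDegree = (n - 1) / 2 ∧
      supNorm ((2 * Polynomial.X - 1) * p.comp (Polynomial.X * (1 - Polynomial.X))) 0 1
          ^ ((1 : ℝ) / n) = tZ n 0 1 :=
  stmt_9_general n hodd
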